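/- arXiv:0911.2861 — 7 statements merged into one kernel-verified Lean document; each statement's English description precedes it below -/
import Mathlib

section
/- Let E be a crossed module extension of G with abelian G-module M, and (Z², Z¹) a lifting system for E. Then the function z³ : G³ → M determined by ι(z³(k,h,g)) = Z²(k,h) Z²(kh,g) Z²(k,hg)^{−1} (^{Z¹(k)}Z²(h,g))^{−1} is well-defined, componentwise pointed, and is a 3-cocycle, that is, z³(lk,h,g) + z³(l,k,hg) = z³(l,k,h) + z³(l,kh,g) + l·z³(k,h,g) for all g,h,k,l ∈ G. -/
/-- Let `E` be a crossed module extension `M →ι T →μ Γ →π G` of `G` with the abelian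
`G`-module `M`, and let `(Z², Z¹)` be a lifting system for `E`. Then there is a unique
function `z³ : G³ → M` with
`ι(z³(k,h,g)) = Z²(k,h) Z²(kh,g) Z²(k,hg)⁻¹ (^{Z¹(k)}Z²(h,g))⁻¹`, and it is
componentwise pointed and satisfies the 3-cocycle identity
`z³(lk,h,g) + z³(l,k,hg) = z³(l,k,h) + z³(l,kh,g) + l·z³(k,h,g)`. -/
theorem three_cocycle_of_lifting_system
    {G M T Γ : Type*} [Group G] [AddCommGroup M] [DistribMulAction G M]
    [Group T] [Group Γ]
    -- the crossed module extension E : M → T → Γ → G with action `act` of Γ on T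
    (act : Γ → T → T)
    (hact1 : ∀ g t s, act g (t * s) = act g t * act g s)
    (hact2 : ∀ t, act 1 t = t)
    (hact3 : ∀ g h t, act (g * h) t = act g (act h t))
    (ι : M → T) (μ : T →* Γ) (π : Γ →* G)
    (hι : Function.Injective ι)
    (hιadd : ∀ a b, ι (a + b) = ι a * ι b)
    (hequi : ∀ g t, μ (act g t) = g * μ t * g⁻¹)
    (hpeif : ∀ t s, act (μ s) t = s * t * s⁻¹)
    (hexact₁ : ∀ t : T, μ t = 1 ↔ ∃ m, ι m = t)
    (hexact₂ : ∀ g : Γ, π g = 1 ↔ ∃ t, μ t = g)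
    (hπ : Function.Surjective π)
    (hcompat : ∀ (e : Γ) (m : M), act e (ι m) = ι (π e • m))
    -- a lifting system (Z², Z¹) for E
    (Z1 : G → Γ) (hZ1 : ∀ g, π (Z1 g) = g) (hZ1pt : Z1 1 = 1)
    (Z2 : G → G → T)
    (hZ2 : ∀ h g, μ (Z2 h g) = Z1 h * Z1 g * (Z1 (h * g))⁻¹)
    (hZ2pt : ∀ g, Z2 1 g = 1 ∧ Z2 g 1 = 1)
    :
    (∃! z3 : G → G → G → M, ∀ k h g,
        ι (z3 k h g) =
          Z2 k h * Z2 (k * h) g * (Z2 k (h * g))⁻¹ * (act (Z1 k) (Z2 h g))⁻¹) ∧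
    (∀ z3 : G → G → G → M,
      (∀ k h g,
          ι (z3 k h g) =
            Z2 k h * Z2 (k * h) g * (Z2 k (h * g))⁻¹ * (act (Z1 k) (Z2 h g))⁻¹) →
        ((∀ h g, z3 1 h g = 0 ∧ z3 h 1 g = 0 ∧ z3 h g 1 = 0) ∧
          (∀ l k h g,
            z3 (l * k) h g + z3 l k (h * g) =
              z3 l k h + z3 l (k * h) g + l • z3 k h g))) := by
  -- basic consequences
  have hι0 : ι 0 = 1 := by
    have h := hιadd 0 0
    rw [add_zero] at h
    exact (right_eq_mul.mp h)
  have hμι : ∀ m, μ (ι m) = 1 := fun m => (hexact₁ (ι m)).mpr ⟨m, rfl⟩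
  have hswap : ∀ (m : M) (t : T), ι m * t = t * ι m := by
    intro m t
    have h := hpeif t (ι m)
    rw [hμι, hact2] at h
    calc ι m * t = ι m * t * (ι m)⁻¹ * ι m := by group
    _ = t * ι m := by rw [← h]
  have hact_one : ∀ γ : Γ, act γ 1 = 1 := by
    intro γ
    have h := hact1 γ 1 1
    rw [mul_one] at h
    exact right_eq_mul.mp h
  have hZ2l : ∀ g, Z2 1 g = 1 := fun g => (hZ2pt g).1
  have hZ2r : ∀ g, Z2 g 1 = 1 := fun g => (hZ2pt g).2
  have hmem : ∀ k h g : G, ∃ m, ι m =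
      Z2 k h * Z2 (k * h) g * (Z2 k (h * g))⁻¹ * (act (Z1 k) (Z2 h g))⁻¹ := by
    intro k h g
    refine (hexact₁ _).mp ?_
    simp only [map_mul, map_inv, hequi, hZ2]
    rw [mul_assoc k h g]
    group
  constructor
  · refine ⟨fun k h g => (hmem k h g).choose, fun k h g => (hmem k h g).choose_spec, ?_⟩
    intro y hy
    funext k h g
    apply hι
    rw [hy, (hmem k h g).choose_spec]
  · intro z3 hz3
    constructor
    · intro h g
      refine ⟨?_, ?_, ?_⟩ <;> apply hι <;>
        simp [hz3, hι0, hZ1pt, hZ2l, hZ2r, hact2, hact_one]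
    · intro l k h g
      have hF : ∀ a b c : G, Z2 a b * Z2 (a * b) c
          = ι (z3 a b c) * act (Z1 a) (Z2 b c) * Z2 a (b * c) := by
        intro a b c
        rw [hz3]
        group
      have hpe : ∀ (a b : G) (t : T), Z2 a b * act (Z1 (a * b)) t
          = act (Z1 a) (act (Z1 b) t) * Z2 a b := by
        intro a b t
        have h2 : Z1 a * Z1 b = μ (Z2 a b) * Z1 (a * b) := by rw [hZ2]; group
        rw [← hact3, h2, hact3, hpeif]
        group
      have e1 : Z2 l k * Z2 (l * k) h * Z2 (l * k * h) g
          = ι (z3 l k h) * ι (z3 l (k * h) g) * act (Z1 l) (ι (z3 k h g)) *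
            (act (Z1 l) (act (Z1 k) (Z2 h g)) *
              (act (Z1 l) (Z2 k (h * g)) * Z2 l (k * (h * g)))) := by
        calc Z2 l k * Z2 (l * k) h * Z2 (l * k * h) g
            = Z2 l k * Z2 (l * k) h * Z2 (l * (k * h)) g := by rw [mul_assoc l k h]
          _ = ι (z3 l k h) * act (Z1 l) (Z2 k h) * Z2 l (k * h) * Z2 (l * (k * h)) g := by
              rw [hF l k h]
          _ = ι (z3 l k h) * act (Z1 l) (Z2 k h) * (Z2 l (k * h) * Z2 (l * (k * h)) g) := by
              rw [mul_assoc]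
          _ = ι (z3 l k h) * act (Z1 l) (Z2 k h) *
              (ι (z3 l (k * h) g) * act (Z1 l) (Z2 (k * h) g) * Z2 l (k * h * g)) := by
              rw [hF l (k * h) g]
          _ = ι (z3 l k h) * (act (Z1 l) (Z2 k h) * ι (z3 l (k * h) g)) *
              (act (Z1 l) (Z2 (k * h) g) * Z2 l (k * h * g)) := by group
          _ = ι (z3 l k h) * (ι (z3 l (k * h) g) * act (Z1 l) (Z2 k h)) *
              (act (Z1 l) (Z2 (k * h) g) * Z2 l (k * h * g)) := by
              rw [← hswap (z3 l (k * h) g) (act (Z1 l) (Z2 k h))]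
          _ = ι (z3 l k h) * ι (z3 l (k * h) g) *
              (act (Z1 l) (Z2 k h) * act (Z1 l) (Z2 (k * h) g)) * Z2 l (k * h * g) := by group
          _ = ι (z3 l k h) * ι (z3 l (k * h) g) *
              act (Z1 l) (Z2 k h * Z2 (k * h) g) * Z2 l (k * h * g) := by rw [hact1]
          _ = ι (z3 l k h) * ι (z3 l (k * h) g) *
              act (Z1 l) (ι (z3 k h g) * act (Z1 k) (Z2 h g) * Z2 k (h * g)) *
              Z2 l (k * h * g) := by rw [hF k h g]
          _ = ι (z3 l k h) * ι (z3 l (k * h) g) *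
              (act (Z1 l) (ι (z3 k h g)) * act (Z1 l) (act (Z1 k) (Z2 h g)) *
                act (Z1 l) (Z2 k (h * g))) * Z2 l (k * h * g) := by rw [hact1, hact1]
          _ = ι (z3 l k h) * ι (z3 l (k * h) g) * act (Z1 l) (ι (z3 k h g)) *
              (act (Z1 l) (act (Z1 k) (Z2 h g)) *
                (act (Z1 l) (Z2 k (h * g)) * Z2 l (k * (h * g)))) := by
              rw [mul_assoc k h g]; group
      have e2 : Z2 l k * Z2 (l * k) h * Z2 (l * k * h) g
          = ι (z3 (l * k) h g) * ι (z3 l k (h * g)) *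
            (act (Z1 l) (act (Z1 k) (Z2 h g)) *
              (act (Z1 l) (Z2 k (h * g)) * Z2 l (k * (h * g)))) := by
        calc Z2 l k * Z2 (l * k) h * Z2 (l * k * h) g
            = Z2 l k * (Z2 (l * k) h * Z2 (l * k * h) g) := by group
          _ = Z2 l k * (ι (z3 (l * k) h g) * act (Z1 (l * k)) (Z2 h g) * Z2 (l * k) (h * g)) := by
              rw [hF (l * k) h g]
          _ = Z2 l k * ι (z3 (l * k) h g) *
              (act (Z1 (l * k)) (Z2 h g) * Z2 (l * k) (h * g)) := by group
          _ = ι (z3 (l * k) h g) * Z2 l k *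
              (act (Z1 (l * k)) (Z2 h g) * Z2 (l * k) (h * g)) := by
              rw [← hswap (z3 (l * k) h g) (Z2 l k)]
          _ = ι (z3 (l * k) h g) * (Z2 l k * act (Z1 (l * k)) (Z2 h g)) *
              Z2 (l * k) (h * g) := by group
          _ = ι (z3 (l * k) h g) * (act (Z1 l) (act (Z1 k) (Z2 h g)) * Z2 l k) *
              Z2 (l * k) (h * g) := by rw [hpe]
          _ = ι (z3 (l * k) h g) * act (Z1 l) (act (Z1 k) (Z2 h g)) *
              (Z2 l k * Z2 (l * k) (h * g)) := by group
          _ = ι (z3 (l * k) h g) * act (Z1 l) (act (Z1 k) (Z2 h g)) *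
              (ι (z3 l k (h * g)) * act (Z1 l) (Z2 k (h * g)) * Z2 l (k * (h * g))) := by
              rw [hF l k (h * g)]
          _ = ι (z3 (l * k) h g) * (act (Z1 l) (act (Z1 k) (Z2 h g)) * ι (z3 l k (h * g))) *
              (act (Z1 l) (Z2 k (h * g)) * Z2 l (k * (h * g))) := by group
          _ = ι (z3 (l * k) h g) * (ι (z3 l k (h * g)) * act (Z1 l) (act (Z1 k) (Z2 h g))) *
              (act (Z1 l) (Z2 k (h * g)) * Z2 l (k * (h * g))) := by
              rw [← hswap (z3 l k (h * g)) (act (Z1 l) (act (Z1 k) (Z2 h g)))]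
          _ = ι (z3 (l * k) h g) * ι (z3 l k (h * g)) *
              (act (Z1 l) (act (Z1 k) (Z2 h g)) *
                (act (Z1 l) (Z2 k (h * g)) * Z2 l (k * (h * g)))) := by group
      have key : ι (z3 (l * k) h g) * ι (z3 l k (h * g))
          = ι (z3 l k h) * ι (z3 l (k * h) g) * act (Z1 l) (ι (z3 k h g)) :=
        mul_right_cancel (e2.symm.trans e1)
      have hcm : ι (l • z3 k h g) = act (Z1 l) (ι (z3 k h g)) := by
        rw [hcompat, hZ1]
      apply hι
      rw [hιadd, hιadd, hιadd, key, hcm]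
end

section
/- Let E be a crossed module extension of G with M and (Z²,Z¹) a lifting system for E. The maps Z̃² : G×G → T such that (Z̃²,Z¹) is again a lifting system for E are exactly the maps of the form Z̃²(h,g) = ι(c²(h,g)) Z²(h,g) for some componentwise pointed 2-cochain c² ∈ C²_cpt(G,M). -/
/-- Let `E` be a crossed module extension `M →ι T →μ Γ →π G` with lifting system
`(Z², Z¹)`. The maps `Z̃² : G×G → T` such that `(Z̃², Z¹)` is again a lifting system for
`E` are exactly the maps of the form `Z̃²(h,g) = ι(c²(h,g)) Z²(h,g)` for some
componentwise pointed 2-cochain `c² ∈ C²_cpt(G,M)`. -/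
theorem lifting_systems_differ_by_cpt_two_cochain
    {G M T Γ : Type*} [Group G] [AddCommGroup M] [DistribMulAction G M]
    [Group T] [Group Γ]
    -- the crossed module extension E : M → T → Γ → G with action `act` of Γ on T
    (act : Γ → T → T)
    (hact1 : ∀ g t s, act g (t * s) = act g t * act g s)
    (hact2 : ∀ t, act 1 t = t)
    (hact3 : ∀ g h t, act (g * h) t = act g (act h t))
    (ι : M → T) (μ : T →* Γ) (π : Γ →* G)
    (hι : Function.Injective ι)
    (hιadd : ∀ a b, ι (a + b) = ι a * ι b)
    (hequi : ∀ g t, μ (act g t) = g * μ t * g⁻¹)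
    (hpeif : ∀ t s, act (μ s) t = s * t * s⁻¹)
    (hexact₁ : ∀ t : T, μ t = 1 ↔ ∃ m, ι m = t)
    (hexact₂ : ∀ g : Γ, π g = 1 ↔ ∃ t, μ t = g)
    (hπ : Function.Surjective π)
    (hcompat : ∀ (e : Γ) (m : M), act e (ι m) = ι (π e • m))
    -- a lifting system (Z², Z¹) for E
    (Z1 : G → Γ) (hZ1 : ∀ g, π (Z1 g) = g) (hZ1pt : Z1 1 = 1)
    (Z2 : G → G → T)
    (hZ2 : ∀ h g, μ (Z2 h g) = Z1 h * Z1 g * (Z1 (h * g))⁻¹)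
    (hZ2pt : ∀ g, Z2 1 g = 1 ∧ Z2 g 1 = 1)
    (Z2' : G → G → T) :
    ((∀ h g, μ (Z2' h g) = Z1 h * Z1 g * (Z1 (h * g))⁻¹) ∧
      (∀ g, Z2' 1 g = 1 ∧ Z2' g 1 = 1)) ↔
    (∃ c2 : G → G → M, (∀ g, c2 1 g = 0 ∧ c2 g 1 = 0) ∧
      ∀ h g, Z2' h g = ι (c2 h g) * Z2 h g) := by
  have hι0 : ι 0 = 1 := by
    have : ι 0 * ι 0 = ι 0 * 1 := by rw [← hιadd]; simp
    exact mul_left_cancel this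
  constructor
  · rintro ⟨h1, h2⟩
    have key : ∀ h g, ∃ m : M, ι m = Z2' h g * (Z2 h g)⁻¹ := by
      intro h g
      rw [← hexact₁]
      rw [map_mul, map_inv, h1 h g, hZ2 h g]
      group
    choose c2 hc2 using key
    refine ⟨c2, ?_, ?_⟩
    · intro g
      constructor
      · have := hc2 1 g
        rw [(h2 g).1, (hZ2pt g).1] at this
        apply hι
        rw [hι0]; simpa using this
      · have := hc2 g 1
        rw [(h2 g).2, (hZ2pt g).2] at this
        apply hι
        rw [hι0]; simpa using this
    · intro h g
      rw [hc2 h g]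
      group
  · rintro ⟨c2, hpt, heq⟩
    constructor
    · intro h g
      have hμι : ∀ m : M, μ (ι m) = 1 := fun m => (hexact₁ (ι m)).mpr ⟨m, rfl⟩
      rw [heq h g, map_mul, hμι, one_mul, hZ2 h g]
    · intro g
      constructor
      · rw [heq 1 g, (hpt g).1, (hZ2pt g).1, hι0, mul_one]
      · rw [heq g 1, (hpt g).2, (hZ2pt g).2, hι0, mul_one]
end

section
/- Let E be a crossed module extension of G with M, (Z²,Z¹) a lifting system, and c² ∈ C²_cpt(G,M). Define Z̃²(h,g) := ι(c²(h,g)) Z²(h,g). Then the 3-cocycle of E with respect to (Z̃²,Z¹) equals c²∂ + z³, where z³ is the 3-cocycle of E with respect to (Z²,Z¹) and ∂ is the group cohomology differential. In particular, the two 3-cocycles are cohomologous. -/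
/-!
Since `ι` is additive and its image is central in `T` (by the Peiffer identity, as `μ t`
acts on `ι M` through `π (μ t) = 1`), the factors `ι (c² (·,·))` of `Z̃²` can be pulled out of
the defining expression of the 3-cocycle of `(Z̃², Z¹)`; the action of `Z¹ k` turns the last one
into `ι (k • c² (h,g))`. What is pulled out is `ι ((c² ∂)(k,h,g))` and what remains is
`ι (z³(k,h,g))`, so injectivity of `ι` gives the formula.
-/

open Subgroup

theorem map_sub_of_map_add {M T : Type*} [AddGroup M] [Group T] {ι : M → T}
    (hιadd : ∀ a b, ι (a + b) = ι a * ι b) (a b : M) : ι (a - b) = ι a * (ι b)⁻¹ :=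
  eq_mul_inv_of_mul_eq (by rw [← hιadd, sub_add_cancel])

theorem mul_mul_inv_mul_inv_eq_of_mem_center {T : Type*} [Group T] {a b c d : T}
    (hb : b ∈ center T) (hc : c ∈ center T) (hd : d ∈ center T) (x y z w : T) :
    a * x * (b * y) * (c * z)⁻¹ * (d * w)⁻¹ = a * b * c⁻¹ * d⁻¹ * (x * y * z⁻¹ * w⁻¹) := by
  have comm : ∀ e ∈ center T, ∀ g, Commute g e := fun e he g => mem_center_iff.mp he g
  rw [(comm c hc z).symm.mul_inv, (comm d hd w).symm.mul_inv,
    (comm b hb x).mul_mul_mul_comm, (comm c hc _).inv_right.mul_mul_mul_comm,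
    (comm d hd _).inv_right.mul_mul_mul_comm]

theorem mem_center_of_peiffer {G M T Γ : Type*} [Monoid G] [MulAction G M] [Group T]
    {act : Γ → T → T} {ι : M → T} {μ : T → Γ} {π : Γ → G}
    (hpeif : ∀ t s, act (μ s) t = s * t * s⁻¹)
    (hcompat : ∀ (e : Γ) (m : M), act e (ι m) = ι (π e • m))
    (hπμ : ∀ t, π (μ t) = 1) (m : M) : ι m ∈ center T :=
  mem_center_iff.mpr fun t => by
    rw [← mul_inv_eq_iff_eq_mul, ← hpeif, hcompat, hπμ, one_smul]

theorem three_cocycle_of_modified_lifting_system_general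
    {G M T Γ : Type*} [Group G] [AddCommGroup M] [DistribMulAction G M]
    [Group T] [Group Γ]
    -- the crossed module extension E : M → T → Γ → G with action `act` of Γ on T
    (act : Γ → T → T)
    (hact1 : ∀ g t s, act g (t * s) = act g t * act g s)
    (ι : M → T) (μ : T →* Γ) (π : Γ →* G)
    (hι : Function.Injective ι)
    (hιadd : ∀ a b, ι (a + b) = ι a * ι b)
    (hpeif : ∀ t s, act (μ s) t = s * t * s⁻¹)
    (hexact₂ : ∀ g : Γ, π g = 1 ↔ ∃ t, μ t = g)
    (hcompat : ∀ (e : Γ) (m : M), act e (ι m) = ι (π e • m))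
    -- a lifting system (Z², Z¹) for E
    (Z1 : G → Γ) (hZ1 : ∀ g, π (Z1 g) = g)
    (Z2 : G → G → T)
    (c2 : G → G → M)
    (Z2' : G → G → T) (hZ2' : ∀ h g, Z2' h g = ι (c2 h g) * Z2 h g)
    (z3 z3' : G → G → G → M)
    (hz3 : ∀ k h g,
      ι (z3 k h g) =
        Z2 k h * Z2 (k * h) g * (Z2 k (h * g))⁻¹ * (act (Z1 k) (Z2 h g))⁻¹)
    (hz3' : ∀ k h g,
      ι (z3' k h g) =
        Z2' k h * Z2' (k * h) g * (Z2' k (h * g))⁻¹ * (act (Z1 k) (Z2' h g))⁻¹) :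
    ∀ k h g,
      z3' k h g = (c2 k h + c2 (k * h) g - c2 k (h * g) - k • c2 h g) + z3 k h g := by
  intro k h g
  have hcentral := mem_center_of_peiffer hpeif hcompat fun t => (hexact₂ (μ t)).2 ⟨t, rfl⟩
  apply hι
  rw [hz3', hZ2', hZ2', hZ2', hZ2', hact1, hcompat, hZ1,
    mul_mul_inv_mul_inv_eq_of_mem_center (hcentral _) (hcentral _) (hcentral _), ← hz3]
  simp only [hιadd, map_sub_of_map_add hιadd]

/-- Let `E` be a crossed module extension `M →ι T →μ Γ →π G` with lifting system
`(Z², Z¹)`, let `c² ∈ C²_cpt(G,M)` and set `Z̃²(h,g) = ι(c²(h,g)) Z²(h,g)`. Then the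
3-cocycle of `E` with respect to `(Z̃², Z¹)` equals `c²∂ + z³`, where `z³` is the
3-cocycle of `E` with respect to `(Z², Z¹)`; in particular the two are cohomologous. -/
theorem three_cocycle_of_modified_lifting_system
    {G M T Γ : Type*} [Group G] [AddCommGroup M] [DistribMulAction G M]
    [Group T] [Group Γ]
    -- the crossed module extension E : M → T → Γ → G with action `act` of Γ on T
    (act : Γ → T → T)
    (hact1 : ∀ g t s, act g (t * s) = act g t * act g s)
    (hact2 : ∀ t, act 1 t = t)
    (hact3 : ∀ g h t, act (g * h) t = act g (act h t))
    (ι : M → T) (μ : T →* Γ) (π : Γ →* G)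
    (hι : Function.Injective ι)
    (hιadd : ∀ a b, ι (a + b) = ι a * ι b)
    (hequi : ∀ g t, μ (act g t) = g * μ t * g⁻¹)
    (hpeif : ∀ t s, act (μ s) t = s * t * s⁻¹)
    (hexact₁ : ∀ t : T, μ t = 1 ↔ ∃ m, ι m = t)
    (hexact₂ : ∀ g : Γ, π g = 1 ↔ ∃ t, μ t = g)
    (hπ : Function.Surjective π)
    (hcompat : ∀ (e : Γ) (m : M), act e (ι m) = ι (π e • m))
    -- a lifting system (Z², Z¹) for E
    (Z1 : G → Γ) (hZ1 : ∀ g, π (Z1 g) = g) (hZ1pt : Z1 1 = 1)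
    (Z2 : G → G → T)
    (hZ2 : ∀ h g, μ (Z2 h g) = Z1 h * Z1 g * (Z1 (h * g))⁻¹)
    (hZ2pt : ∀ g, Z2 1 g = 1 ∧ Z2 g 1 = 1)
    (c2 : G → G → M) (hc2 : ∀ g, c2 1 g = 0 ∧ c2 g 1 = 0)
    (Z2' : G → G → T) (hZ2' : ∀ h g, Z2' h g = ι (c2 h g) * Z2 h g)
    (z3 z3' : G → G → G → M)
    (hz3 : ∀ k h g,
      ι (z3 k h g) =
        Z2 k h * Z2 (k * h) g * (Z2 k (h * g))⁻¹ * (act (Z1 k) (Z2 h g))⁻¹)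
    (hz3' : ∀ k h g,
      ι (z3' k h g) =
        Z2' k h * Z2' (k * h) g * (Z2' k (h * g))⁻¹ * (act (Z1 k) (Z2' h g))⁻¹) :
    ∀ k h g,
      z3' k h g = (c2 k h + c2 (k * h) g - c2 k (h * g) - k • c2 h g) + z3 k h g :=
  three_cocycle_of_modified_lifting_system_general act hact1 ι μ π hι hιadd hpeif hexact₂ hcompat Z1
    hZ1 Z2 c2 Z2' hZ2' z3 z3' hz3 hz3'
end

section
/- Let E be a crossed module extension of G with M, and let (Z²,Z¹), (Z̃²,Z̃¹) be two lifting systems for E. Then the 3-cocycles z³_{(Z²,Z¹)} and z³_{(Z̃²,Z̃¹)} are cohomologous, i.e. their difference lies in B³_cpt(G,M). Hence the cohomology class associated to E is independent of the choice of lifting system. -/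
/-- Let `E` be a crossed module extension `M →ι T →μ Γ →π G` and let `(Z², Z¹)` and
`(Z̃², Z̃¹)` be two lifting systems for `E`. Then the associated 3-cocycles are
cohomologous: their difference is the coboundary of a componentwise pointed 2-cochain,
i.e. lies in `B³_cpt(G,M)`. Hence the cohomology class associated to `E` is independent
of the choice of lifting system. -/
theorem three_cocycles_of_lifting_systems_cohomologous
    {G M T Γ : Type*} [Group G] [AddCommGroup M] [DistribMulAction G M]
    [Group T] [Group Γ]
    -- the crossed module extension E : M → T → Γ → G with action `act` of Γ on T
    (act : Γ → T → T)
    (hact1 : ∀ g t s, act g (t * s) = act g t * act g s)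
    (hact2 : ∀ t, act 1 t = t)
    (hact3 : ∀ g h t, act (g * h) t = act g (act h t))
    (ι : M → T) (μ : T →* Γ) (π : Γ →* G)
    (hι : Function.Injective ι)
    (hιadd : ∀ a b, ι (a + b) = ι a * ι b)
    (hequi : ∀ g t, μ (act g t) = g * μ t * g⁻¹)
    (hpeif : ∀ t s, act (μ s) t = s * t * s⁻¹)
    (hexact₁ : ∀ t : T, μ t = 1 ↔ ∃ m, ι m = t)
    (hexact₂ : ∀ g : Γ, π g = 1 ↔ ∃ t, μ t = g)
    (hπ : Function.Surjective π)
    (hcompat : ∀ (e : Γ) (m : M), act e (ι m) = ι (π e • m))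
    -- a lifting system (Z², Z¹) for E
    (Z1 : G → Γ) (hZ1 : ∀ g, π (Z1 g) = g) (hZ1pt : Z1 1 = 1)
    (Z2 : G → G → T)
    (hZ2 : ∀ h g, μ (Z2 h g) = Z1 h * Z1 g * (Z1 (h * g))⁻¹)
    (hZ2pt : ∀ g, Z2 1 g = 1 ∧ Z2 g 1 = 1)
    -- a lifting system (Z², Z¹) for E
    (Z1' : G → Γ) (hZ1'' : ∀ g, π (Z1' g) = g) (hZ1''pt : Z1' 1 = 1)
    (Z2' : G → G → T)
    (hZ2'' : ∀ h g, μ (Z2' h g) = Z1' h * Z1' g * (Z1' (h * g))⁻¹)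
    (hZ2''pt : ∀ g, Z2' 1 g = 1 ∧ Z2' g 1 = 1)
    (z3 z3' : G → G → G → M)
    (hz3 : ∀ k h g,
      ι (z3 k h g) =
        Z2 k h * Z2 (k * h) g * (Z2 k (h * g))⁻¹ * (act (Z1 k) (Z2 h g))⁻¹)
    (hz3' : ∀ k h g,
      ι (z3' k h g) =
        Z2' k h * Z2' (k * h) g * (Z2' k (h * g))⁻¹ * (act (Z1' k) (Z2' h g))⁻¹) :
    ∃ c2 : G → G → M, (∀ g, c2 1 g = 0 ∧ c2 g 1 = 0) ∧
      ∀ k h g,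
        z3' k h g - z3 k h g =
          c2 k h + c2 (k * h) g - c2 k (h * g) - k • c2 h g := by
  classical
  -- basic facts
  have hι0 : ι 0 = 1 := by
    have h := hιadd 0 0
    rw [add_zero] at h
    have h2 : ι 0 * 1 = ι 0 * ι 0 := by rw [mul_one]; exact h
    exact (mul_left_cancel h2).symm
  have hπμ : ∀ t, π (μ t) = 1 := fun t => (hexact₂ (μ t)).mpr ⟨t, rfl⟩
  have hcent : ∀ (m : M) (t : T), ι m * t = t * ι m := by
    intro m t
    have h1 := hpeif (ι m) t
    rw [hcompat, hπμ, one_smul] at h1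
    conv_lhs => rw [h1]
    group
  have hswapc : ∀ (m : M) (x y : T), x * (ι m * y) = ι m * (x * y) := by
    intro m x y
    rw [← mul_assoc, ← hcent, mul_assoc]
  have hact_one : ∀ e : Γ, act e 1 = 1 := by
    intro e
    have h := hact1 e 1 1
    rw [one_mul] at h
    have h2 : act e 1 * 1 = act e 1 * act e 1 := by rw [mul_one]; exact h
    exact (mul_left_cancel h2).symm
  have hact_inv : ∀ (e : Γ) (t : T), act e t⁻¹ = (act e t)⁻¹ := by
    intro e t
    have h : act e t * act e t⁻¹ = 1 := by rw [← hact1, mul_inv_cancel, hact_one]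
    exact (inv_eq_of_mul_eq_one_right h).symm
  have hactcancel : ∀ (e : Γ) (x : T), act e⁻¹ (act e x) = x := by
    intro e x
    rw [← hact3, inv_mul_cancel, hact2]
  -- choose τ
  obtain ⟨τ, hτ, hτ1⟩ : ∃ τ : G → T, (∀ g, μ (τ g) = Z1' g * (Z1 g)⁻¹) ∧ τ 1 = 1 := by
    have hτex : ∀ g, ∃ t, μ t = Z1' g * (Z1 g)⁻¹ := by
      intro g
      apply (hexact₂ _).mp
      rw [map_mul, map_inv, hZ1'', hZ1, mul_inv_cancel]
    choose τ0 hτ0 using hτex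
    refine ⟨fun g => if g = 1 then 1 else τ0 g, fun g => ?_, by simp⟩
    by_cases hg : g = 1
    · subst hg; simp [hZ1pt, hZ1''pt]
    · simp [hg, hτ0]
  -- the comparison 2-cochain A in T
  obtain ⟨A, hAdef⟩ :
      ∃ A : G → G → T, ∀ k h, A k h = τ k * act (Z1 k) (τ h) * Z2 k h * (τ (k * h))⁻¹ :=
    ⟨_, fun _ _ => rfl⟩
  have hμA : ∀ k h, μ (Z2' k h * (A k h)⁻¹) = 1 := by
    intro k h
    rw [hAdef]
    simp only [map_mul, map_inv, hZ2'', hequi, hτ, hZ2]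
    group
  have hc2ex : ∀ k h, ∃ m, ι m = Z2' k h * (A k h)⁻¹ := fun k h => (hexact₁ _).mp (hμA k h)
  choose c2 hc2 using hc2ex
  have hc2' : ∀ k h, Z2' k h = ι (c2 k h) * A k h := by
    intro k h
    rw [hc2]
    group
  refine ⟨c2, ?_, ?_⟩
  · intro g
    constructor
    · apply hι
      rw [hc2 1 g, hι0]
      have hA1 : A 1 g = 1 := by
        rw [hAdef, hτ1, hZ1pt, hact2, (hZ2pt g).1, one_mul g]
        group
      rw [hA1, (hZ2''pt g).1]
      group
    · apply hι
      rw [hc2 g 1, hι0]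
      have hA1 : A g 1 = 1 := by
        rw [hAdef, hτ1, hact_one, (hZ2pt g).2, mul_one g]
        group
      rw [hA1, (hZ2''pt g).2]
      group
  · intro k h g
    -- rearranged cocycle identities
    have hz3r : Z2 k h * Z2 (k * h) g = ι (z3 k h g) * act (Z1 k) (Z2 h g) * Z2 k (h * g) := by
      rw [hz3 k h g]
      group
    have hz3r' :
        Z2' k h * Z2' (k * h) g = ι (z3' k h g) * act (Z1' k) (Z2' h g) * Z2' k (h * g) := by
      rw [hz3' k h g]
      group
    have hZ1'act : ∀ x : T, act (Z1' k) x = τ k * act (Z1 k) x * (τ k)⁻¹ := by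
      intro x
      have h1 : Z1' k = μ (τ k) * Z1 k := by rw [hτ]; group
      rw [h1, hact3, hpeif]
    have hswap : ∀ x : T,
        Z2 k h * act (Z1 (k * h)) x = act (Z1 k) (act (Z1 h) x) * Z2 k h := by
      intro x
      have h1 := hpeif (act (Z1 (k * h)) x) (Z2 k h)
      rw [hZ2, hact3, hact3, hactcancel] at h1
      rw [h1]
      group
    -- the key identity: the A's satisfy the 2-cocycle relation up to ι (z3 k h g)
    have lhs_eq : A k h * A (k * h) g =
        ι (z3 k h g) * (τ k * (act (Z1 k) (τ h) * (act (Z1 k) (act (Z1 h) (τ g)) *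
          (act (Z1 k) (Z2 h g) * (Z2 k (h * g) * (τ (k * h * g))⁻¹))))) := by
      calc A k h * A (k * h) g
          = τ k * act (Z1 k) (τ h) * (Z2 k h * act (Z1 (k * h)) (τ g)) * Z2 (k * h) g *
              (τ (k * h * g))⁻¹ := by
            rw [hAdef k h, hAdef (k * h) g]; group
        _ = τ k * act (Z1 k) (τ h) * (act (Z1 k) (act (Z1 h) (τ g)) * Z2 k h) * Z2 (k * h) g *
              (τ (k * h * g))⁻¹ := by rw [hswap (τ g)]
        _ = τ k * act (Z1 k) (τ h) * act (Z1 k) (act (Z1 h) (τ g)) * (Z2 k h * Z2 (k * h) g) *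
              (τ (k * h * g))⁻¹ := by group
        _ = τ k * act (Z1 k) (τ h) * act (Z1 k) (act (Z1 h) (τ g)) *
              (ι (z3 k h g) * act (Z1 k) (Z2 h g) * Z2 k (h * g)) * (τ (k * h * g))⁻¹ := by
            rw [hz3r]
        _ = ι (z3 k h g) * (τ k * (act (Z1 k) (τ h) * (act (Z1 k) (act (Z1 h) (τ g)) *
              (act (Z1 k) (Z2 h g) * (Z2 k (h * g) * (τ (k * h * g))⁻¹))))) := by
            simp only [mul_assoc]
            rw [hswapc (z3 k h g), hswapc (z3 k h g), hswapc (z3 k h g)]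
    have rhs_eq : ι (z3 k h g) * act (Z1' k) (A h g) * A k (h * g) =
        ι (z3 k h g) * (τ k * (act (Z1 k) (τ h) * (act (Z1 k) (act (Z1 h) (τ g)) *
          (act (Z1 k) (Z2 h g) * (Z2 k (h * g) * (τ (k * h * g))⁻¹))))) := by
      rw [hZ1'act, hAdef h g, hAdef k (h * g), hact1, hact1, hact1, hact_inv,
        ← mul_assoc k h g]
      group
    have hkeyA : A k h * A (k * h) g =
        ι (z3 k h g) * act (Z1' k) (A h g) * A k (h * g) := lhs_eq.trans rhs_eq.symm
    -- assemble
    rw [hc2' k h, hc2' (k * h) g, hc2' h g, hc2' k (h * g)] at hz3r'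
    rw [hact1 (Z1' k) (ι (c2 h g)) (A h g), hcompat (Z1' k) (c2 h g), hZ1'' k] at hz3r'
    simp only [mul_assoc] at hz3r'
    rw [hswapc (c2 (k * h) g) (A k h)] at hz3r'
    rw [hkeyA] at hz3r'
    simp only [mul_assoc] at hz3r'
    rw [hswapc (c2 k (h * g)) (act (Z1' k) (A h g))] at hz3r'
    simp only [← mul_assoc] at hz3r'
    simp only [← hιadd] at hz3r'
    have h10 := hι (mul_right_cancel (mul_right_cancel hz3r'))
    have h11 : z3' k h g = c2 k h + c2 (k * h) g + z3 k h g - c2 k (h * g) - k • c2 h g := by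
      rw [eq_sub_iff_add_eq, eq_sub_iff_add_eq]
      exact h10.symm
    rw [h11]
    abel
end

section
/- Let φ : E → Ẽ be an extension equivalence between crossed module extensions of G with M, and suppose (Z²,Z¹) is a lifting system for E and (Z̃²,Z̃¹) a lifting system for Ẽ with Z̃¹ = φ₀ ∘ Z¹ and Z̃² = φ₁ ∘ Z². Then the associated 3-cocycles are equal: z³_{Ẽ,(Z̃²,Z̃¹)} = z³_{E,(Z²,Z¹)}. -/
theorem three_cocycle_compat_general
    {G M T Γ : Type*} [Group G]
    [Group T] [Group Γ]
    -- the crossed module extension E : M → T → Γ → G with action `act` of Γ on T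
    (act : Γ → T → T)
    (ι : M → T)
    {T' Γ' : Type*} [Group T'] [Group Γ']
    -- the crossed module extension E : M → T' → Γ' → G with act'ion `act'` of Γ' on T'
    (act' : Γ' → T' → T')
    (ι' : M → T')
    (hι'' : Function.Injective ι')
    -- an extension equivalence φ = (φ₁, φ₀) : E → Ẽ
    (φ₀ : Γ →* Γ') (φ₁ : T →* T')
    (hφι : ∀ m, φ₁ (ι m) = ι' m)
    (hφact : ∀ g t, φ₁ (act g t) = act' (φ₀ g) (φ₁ t))
    -- a lifting system (Z², Z¹) for E
    (Z1 : G → Γ)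
    (Z2 : G → G → T)
    (Z1' : G → Γ')
    (Z2' : G → G → T')
    (hrel1 : ∀ g, Z1' g = φ₀ (Z1 g))
    (hrel2 : ∀ h g, Z2' h g = φ₁ (Z2 h g))
    (z3 z3' : G → G → G → M)
    (hz3 : ∀ k h g,
      ι (z3 k h g) =
        Z2 k h * Z2 (k * h) g * (Z2 k (h * g))⁻¹ * (act (Z1 k) (Z2 h g))⁻¹)
    (hz3' : ∀ k h g,
      ι' (z3' k h g) =
        Z2' k h * Z2' (k * h) g * (Z2' k (h * g))⁻¹ * (act' (Z1' k) (Z2' h g))⁻¹) :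
    z3' = z3 := by
  funext k h g
  apply hι''
  calc ι' (z3' k h g)
      = φ₁ (Z2 k h * Z2 (k * h) g * (Z2 k (h * g))⁻¹ * (act (Z1 k) (Z2 h g))⁻¹) := by
        simp only [hz3', map_mul, map_inv, hrel1, hrel2, hφact]
    _ = ι' (z3 k h g) := by rw [← hz3, hφι]

/-- Let `φ : E → Ẽ` be an extension equivalence between crossed module extensions of `G`
with `M`, and let `(Z², Z¹)`, `(Z̃², Z̃¹)` be lifting systems for `E`, `Ẽ` with
`Z̃¹ = φ₀ ∘ Z¹` and `Z̃² = φ₁ ∘ Z²`. Then the associated 3-cocycles coincide: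
`z³_{Ẽ,(Z̃²,Z̃¹)} = z³_{E,(Z²,Z¹)}`. -/
theorem three_cocycle_compat
    {G M T Γ : Type*} [Group G] [AddCommGroup M] [DistribMulAction G M]
    [Group T] [Group Γ]
    -- the crossed module extension E : M → T → Γ → G with action `act` of Γ on T
    (act : Γ → T → T)
    (hact1 : ∀ g t s, act g (t * s) = act g t * act g s)
    (hact2 : ∀ t, act 1 t = t)
    (hact3 : ∀ g h t, act (g * h) t = act g (act h t))
    (ι : M → T) (μ : T →* Γ) (π : Γ →* G)
    (hι : Function.Injective ι)
    (hιadd : ∀ a b, ι (a + b) = ι a * ι b)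
    (hequi : ∀ g t, μ (act g t) = g * μ t * g⁻¹)
    (hpeif : ∀ t s, act (μ s) t = s * t * s⁻¹)
    (hexact₁ : ∀ t : T, μ t = 1 ↔ ∃ m, ι m = t)
    (hexact₂ : ∀ g : Γ, π g = 1 ↔ ∃ t, μ t = g)
    (hπ : Function.Surjective π)
    (hcompat : ∀ (e : Γ) (m : M), act e (ι m) = ι (π e • m))
    {T' Γ' : Type*} [Group T'] [Group Γ']
    -- the crossed module extension E : M → T' → Γ' → G with act'ion `act'` of Γ' on T'
    (act' : Γ' → T' → T')
    (hact'1 : ∀ g t s, act' g (t * s) = act' g t * act' g s)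
    (hact'2 : ∀ t, act' 1 t = t)
    (hact'3 : ∀ g h t, act' (g * h) t = act' g (act' h t))
    (ι' : M → T') (μ' : T' →* Γ') (π' : Γ' →* G)
    (hι'' : Function.Injective ι')
    (hι''add : ∀ a b, ι' (a + b) = ι' a * ι' b)
    (hequi' : ∀ g t, μ' (act' g t) = g * μ' t * g⁻¹)
    (hpeif' : ∀ t s, act' (μ' s) t = s * t * s⁻¹)
    (hexact''₁ : ∀ t : T', μ' t = 1 ↔ ∃ m, ι' m = t)
    (hexact''₂ : ∀ g : Γ', π' g = 1 ↔ ∃ t, μ' t = g)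
    (hπ' : Function.Surjective π')
    (hcompat' : ∀ (e : Γ') (m : M), act' e (ι' m) = ι' (π' e • m))
    -- an extension equivalence φ = (φ₁, φ₀) : E → Ẽ
    (φ₀ : Γ →* Γ') (φ₁ : T →* T')
    (hφι : ∀ m, φ₁ (ι m) = ι' m)
    (hφμ : ∀ t, μ' (φ₁ t) = φ₀ (μ t))
    (hφπ : ∀ g, π' (φ₀ g) = π g)
    (hφact : ∀ g t, φ₁ (act g t) = act' (φ₀ g) (φ₁ t))
    -- a lifting system (Z², Z¹) for E
    (Z1 : G → Γ) (hZ1 : ∀ g, π (Z1 g) = g) (hZ1pt : Z1 1 = 1)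
    (Z2 : G → G → T)
    (hZ2 : ∀ h g, μ (Z2 h g) = Z1 h * Z1 g * (Z1 (h * g))⁻¹)
    (hZ2pt : ∀ g, Z2 1 g = 1 ∧ Z2 g 1 = 1)
    (Z1' : G → Γ') (hZ1'sec : ∀ g, π' (Z1' g) = g) (hZ1'pt : Z1' 1 = 1)
    (Z2' : G → G → T')
    (hZ2'lift : ∀ h g, μ' (Z2' h g) = Z1' h * Z1' g * (Z1' (h * g))⁻¹)
    (hZ2'pt : ∀ g, Z2' 1 g = 1 ∧ Z2' g 1 = 1)
    (hrel1 : ∀ g, Z1' g = φ₀ (Z1 g))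
    (hrel2 : ∀ h g, Z2' h g = φ₁ (Z2 h g))
    (z3 z3' : G → G → G → M)
    (hz3 : ∀ k h g,
      ι (z3 k h g) =
        Z2 k h * Z2 (k * h) g * (Z2 k (h * g))⁻¹ * (act (Z1 k) (Z2 h g))⁻¹)
    (hz3' : ∀ k h g,
      ι' (z3' k h g) =
        Z2' k h * Z2' (k * h) g * (Z2' k (h * g))⁻¹ * (act' (Z1' k) (Z2' h g))⁻¹) :
    z3' = z3 :=
  three_cocycle_compat_general act ι act' ι' hι'' φ₀ φ₁ hφι hφact Z1 Z2 Z1' Z2' hrel1 hrel2 z3 z3'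
    hz3 hz3'
end

section
/- Let φ : E → Ẽ be an extension equivalence between crossed module extensions of G with M, and let s̃¹ : im μ_{Ẽ} → T_{Ẽ} be a pointed section of (μ_{Ẽ} corestricted to its image). Then there exists exactly one pointed section s¹ : im μ_E → T_E of (μ_E corestricted to its image) such that φ₁ ∘ s¹ = s̃¹ ∘ (φ₀ restricted to im μ_E → im μ_{Ẽ}). -/
/-!
Both `ker μ` and `ker μ'` are the image of `M`, and `φ₁ ∘ ι = ι'`, so `φ₁` maps `ker μ`
bijectively onto `ker μ'`. Translating by an element of a fibre, `φ₁` then maps each fibre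
`μ⁻¹(x)` bijectively onto the fibre `μ'⁻¹(φ₀ x)`; hence `s¹ x` is forced to be the unique
preimage of `s̃¹ (φ₀ x)` in `μ⁻¹(x)`, and `s¹ 1 = 1` because `1` is that preimage for `x = 1`.
-/

section Kernel

variable {M T Γ T' Γ' : Type*} [Group T] [Group Γ] [Group T'] [Group Γ']
  {ι : M → T} {ι' : M → T'} {μ : T →* Γ} {μ' : T' →* Γ'} {φ₁ : T →* T'}

theorem injOn_ker_of_ker_subset_range (hker : ∀ t, μ t = 1 → ∃ m, ι m = t)
    (hι' : Function.Injective ι') (hφι : ∀ m, φ₁ (ι m) = ι' m) :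
    Set.InjOn φ₁ μ.ker := by
  rintro a ha b hb hab
  obtain ⟨m, rfl⟩ := hker a ha
  obtain ⟨n, rfl⟩ := hker b hb
  rw [hφι, hφι] at hab
  rw [hι' hab]

theorem surjOn_ker_of_ker_subset_range (hιμ : ∀ m, μ (ι m) = 1)
    (hker' : ∀ t, μ' t = 1 → ∃ m, ι' m = t) (hφι : ∀ m, φ₁ (ι m) = ι' m) :
    Set.SurjOn φ₁ μ.ker μ'.ker := by
  intro t ht
  obtain ⟨m, rfl⟩ := hker' t ht
  exact ⟨ι m, hιμ m, hφι m⟩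

end Kernel

section Fibre

variable {T Γ T' Γ' : Type*} [Group T] [Group Γ] [Group T'] [Group Γ']
  {μ : T →* Γ} {μ' : T' →* Γ'} {φ₁ : T →* T'} {φ₀ : Γ →* Γ'}

theorem eq_of_map_eq_of_injOn_ker (h : Set.InjOn φ₁ μ.ker) {a b : T}
    (hμ : μ a = μ b) (hφ : φ₁ a = φ₁ b) : a = b := by
  have hk : a⁻¹ * b ∈ μ.ker := by simp [MonoidHom.mem_ker, hμ]
  exact inv_mul_eq_one.mp (h hk (one_mem _) (by simp [hφ]))

theorem exists_lift_of_surjOn_ker (hφμ : ∀ t, μ' (φ₁ t) = φ₀ (μ t))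
    (h : Set.SurjOn φ₁ μ.ker μ'.ker) {t₀ : T} {y : T'} (hy : μ' y = φ₀ (μ t₀)) :
    ∃ t, μ t = μ t₀ ∧ φ₁ t = y := by
  obtain ⟨k, hk, hφk⟩ := h (show (φ₁ t₀)⁻¹ * y ∈ μ'.ker by simp [MonoidHom.mem_ker, hφμ, hy])
  exact ⟨t₀ * k, by simp [MonoidHom.mem_ker.mp hk], by simp [hφk]⟩

theorem map_mem_range_of_comp_eq (hφμ : ∀ t, μ' (φ₁ t) = φ₀ (μ t)) (x : μ.range) :
    φ₀ x ∈ μ'.range := by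
  obtain ⟨t, ht⟩ := x.2
  exact ⟨φ₁ t, by rw [hφμ, ht]⟩

theorem existsUnique_section_comp_eq (hφμ : ∀ t, μ' (φ₁ t) = φ₀ (μ t))
    (hinj : Set.InjOn φ₁ μ.ker) (hsurj : Set.SurjOn φ₁ μ.ker μ'.ker)
    (s' : μ'.range → T') (hs' : ∀ x, μ' (s' x) = x) (hs'1 : s' 1 = 1) :
    ∃! s : μ.range → T, (∀ x, μ (s x) = x) ∧ s 1 = 1 ∧
      ∀ x, φ₁ (s x) = s' ⟨φ₀ x, map_mem_range_of_comp_eq hφμ x⟩ := by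
  have hlift : ∀ x : μ.range,
      ∃ t, μ t = x ∧ φ₁ t = s' ⟨φ₀ x, map_mem_range_of_comp_eq hφμ x⟩ := by
    rintro ⟨_, t₀, rfl⟩
    exact exists_lift_of_surjOn_ker hφμ hsurj (hs' _)
  choose s hsμ hsφ using hlift
  have hs1 : s 1 = 1 := by
    refine eq_of_map_eq_of_injOn_ker hinj (by simp [hsμ]) ?_
    rw [hsφ, map_one, ← hs'1]
    exact congrArg s' (Subtype.ext (map_one φ₀))
  refine ⟨s, ⟨hsμ, hs1, hsφ⟩, fun s₂ ⟨hμ₂, _, hφ₂⟩ => funext fun x => ?_⟩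
  exact eq_of_map_eq_of_injOn_ker hinj (by rw [hμ₂, hsμ]) (by rw [hφ₂, hsφ])

end Fibre

theorem unique_compatible_section
    {M T Γ : Type*}
    [Group T] [Group Γ]
    (ι : M → T) (μ : T →* Γ)
    (hexact₁ : ∀ t : T, μ t = 1 ↔ ∃ m, ι m = t)
    {T' Γ' : Type*} [Group T'] [Group Γ']
    (ι' : M → T') (μ' : T' →* Γ')
    (hι'' : Function.Injective ι')
    (hexact''₁ : ∀ t : T', μ' t = 1 ↔ ∃ m, ι' m = t)
    -- an extension equivalence φ = (φ₁, φ₀) : E → Ẽ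
    (φ₀ : Γ →* Γ') (φ₁ : T →* T')
    (hφι : ∀ m, φ₁ (ι m) = ι' m)
    (hφμ : ∀ t, μ' (φ₁ t) = φ₀ (μ t))
    (s1' : μ'.range → T')
    (hs1' : ∀ x : μ'.range, μ' (s1' x) = x)
    (hs1'pt : s1' 1 = 1) :
    ∃! s1 : μ.range → T,
      (∀ x : μ.range, μ (s1 x) = x) ∧ s1 1 = 1 ∧
      ∀ x : μ.range,
        φ₁ (s1 x) =
          s1' ⟨φ₀ x, by
            obtain ⟨t, ht⟩ := MonoidHom.mem_range.mp x.2
            exact MonoidHom.mem_range.mpr ⟨φ₁ t, by rw [hφμ t, ht]⟩⟩ :=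
  existsUnique_section_comp_eq hφμ
    (injOn_ker_of_ker_subset_range (fun t => (hexact₁ t).mp) hι'' hφι)
    (surjOn_ker_of_ker_subset_range (fun m => (hexact₁ _).mpr ⟨m, rfl⟩)
      (fun t => (hexact''₁ t).mp) hφι)
    s1' hs1' hs1'pt
end

section
/- Let F be a free group on the underlying pointed set of a group G with basis s⁰, π : F → G the extension of id_G, and z²(h,g) = s⁰(h)s⁰(g)s⁰(hg)^{−1}. If g,g',h,h' ∈ G∖{1} satisfy z²(h,g) = z²(h',g'), then h = h' and g = g'. -/
/-! The reduced word of `z²(h,g)` is `h g (hg)⁻¹`, or just `h g` when `hg = 1`; no cancellation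
occurs since `g ≠ hg`. Either way its first two letters are `h` and `g`, and an element of a free
group is determined by its reduced word. -/

open Classical in
/-- The basis map `s⁰ : G → F` of the free group `F` on the underlying pointed set of `G`,
i.e. the free group on the set `G ∖ {1}`, sending `1` to `1` and `g ≠ 1` to the
corresponding free generator. -/
noncomputable def basisSection (G : Type*) [Group G] : G → FreeGroup {g : G // g ≠ 1} :=
  fun g => if h : g = 1 then 1 else FreeGroup.of ⟨g, h⟩

namespace FreeGroup

variable {α : Type*} [DecidableEq α]

theorem toWord_of_mul_of (a b : α) : (of a * of b).toWord = [(a, true), (b, true)] := by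
  simp [of, mul_mk, toWord_mk, reduce.cons]

theorem toWord_of_mul_of_mul_inv_of {a b c : α} (hbc : b ≠ c) :
    (of a * of b * (of c)⁻¹).toWord = [(a, true), (b, true), (c, false)] := by
  simp [of, inv_mk, mul_mk, toWord_mk, invRev, reduce.cons, hbc]

end FreeGroup

theorem basisSection_of_ne_one {G : Type*} [Group G] {g : G} (hg : g ≠ 1) :
    basisSection G g = FreeGroup.of ⟨g, hg⟩ :=
  dif_neg hg

theorem basisSection_one (G : Type*) [Group G] : basisSection G 1 = 1 :=
  dif_pos rfl

open Classical in
theorem toWord_basisSection_cocycle_take_two {G : Type*} [Group G] {g h : G}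
    (hg : g ≠ 1) (hh : h ≠ 1) :
    (basisSection G h * basisSection G g * (basisSection G (h * g))⁻¹).toWord.take 2 =
      [(⟨h, hh⟩, true), (⟨g, hg⟩, true)] := by
  rw [basisSection_of_ne_one hg, basisSection_of_ne_one hh]
  by_cases hhg : h * g = 1
  · rw [hhg, basisSection_one, inv_one, mul_one, FreeGroup.toWord_of_mul_of]
    rfl
  · have hne : (⟨g, hg⟩ : {x : G // x ≠ 1}) ≠ ⟨h * g, hhg⟩ := fun e =>
      hh (right_eq_mul.mp (congrArg Subtype.val e))
    rw [basisSection_of_ne_one hhg, FreeGroup.toWord_of_mul_of_mul_inv_of hne]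
    rfl

/-- Let `F` be the free group on the underlying pointed set of `G` with basis `s⁰`, and
`z²(h,g) = s⁰(h)s⁰(g)s⁰(hg)⁻¹`. If `g, g', h, h' ∈ G ∖ {1}` satisfy
`z²(h,g) = z²(h',g')`, then `h = h'` and `g = g'`. -/
theorem basisSection_cocycle_injective {G : Type*} [Group G] (g g' h h' : G)
    (hg : g ≠ 1) (hg' : g' ≠ 1) (hh : h ≠ 1) (hh' : h' ≠ 1)
    (heq : basisSection G h * basisSection G g * (basisSection G (h * g))⁻¹ =
      basisSection G h' * basisSection G g' * (basisSection G (h' * g'))⁻¹) :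
    h = h' ∧ g = g' := by
  classical
  have hw := congrArg (fun x => x.toWord.take 2) heq
  simp only [toWord_basisSection_cocycle_take_two hg hh,
    toWord_basisSection_cocycle_take_two hg' hh'] at hw
  simpa [Subtype.ext_iff] using hw
end
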